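/- arXiv:1410.6021 — 11 statements merged into one kernel-verified Lean document; each statement's English description precedes it below -/
import Mathlib

section
/- Let V be a type, m : ℕ, and σ : Fin m → (V → V) the input maps of a homogeneous network, and let ~ be an equivalence relation on V. Then the following are equivalent: (i) for every response function f : (Fin m → ℝ) → ℝ, the network map γ[σ,f] preserves the synchrony space Syn(~, ℝ), i.e. for every x : V → ℝ with (∀ v w, v ~ w → x v = x w) one has ∀ v w, v ~ w → γ[σ,f] x v = γ[σ,f] x w; (ii) the relation ~ is balanced, i.e. for every j : Fin m and all v w : V, v ~ w implies σ j v ~ σ j w. -/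
/-!
Balanced relations make related cells receive identical inputs from a synchronous state.
Conversely, if `v ~ w` but `σ j v ≁ σ j w`, a state that is constant on classes but takes
different values at `σ j v` and `σ j w` is synchronous, while the response function reading
the `j`-th input separates `v` from `w`.
-/

def networkMap {V E : Type*} {m : ℕ} (σ : Fin m → V → V)
    (f : (Fin m → E) → E) (x : V → E) : V → E :=
  fun v => f (fun j => x (σ j v))

def synchronySpace {V : Type*} (r : V → V → Prop) (E : Type*) : Set (V → E) :=
  {x | ∀ v w, r v w → x v = x w}

def IsBalanced {V : Type*} {m : ℕ} (σ : Fin m → V → V) (r : V → V → Prop) : Prop :=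
  ∀ j v w, r v w → r (σ j v) (σ j w)

section

variable {V E : Type*} {m : ℕ} {σ : Fin m → V → V} {r : V → V → Prop}

theorem IsBalanced.networkMap_mem_synchronySpace (hσ : IsBalanced σ r)
    (f : (Fin m → E) → E) {x : V → E} (hx : x ∈ synchronySpace r E) :
    networkMap σ f x ∈ synchronySpace r E :=
  fun v w hvw => congrArg f (funext fun j => hx _ _ (hσ j v w hvw))

theorem exists_mem_synchronySpace_apply_ne [Nontrivial E] (hr : Equivalence r) {p q : V}
    (hpq : ¬ r p q) : ∃ x ∈ synchronySpace r E, x p ≠ x q := by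
  classical
  obtain ⟨a, b, hab⟩ := exists_pair_ne E
  refine ⟨fun u => if r p u then a else b, fun v w hvw => ?_, by simp [hr.refl p, hpq, hab]⟩
  have hclass : r p v ↔ r p w := ⟨fun h => hr.trans h hvw, fun h => hr.trans h (hr.symm hvw)⟩
  simp only [hclass]

theorem isBalanced_of_forall_networkMap_mem [Nontrivial E] (hr : Equivalence r)
    (h : ∀ f : (Fin m → E) → E, ∀ x ∈ synchronySpace r E, networkMap σ f x ∈ synchronySpace r E) :
    IsBalanced σ r := by
  intro j v w hvw
  by_contra hne
  obtain ⟨x, hx, hx_ne⟩ := exists_mem_synchronySpace_apply_ne (E := E) hr hne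
  exact hx_ne (h (fun y => y j) x hx v w hvw)

theorem forall_networkMap_mem_synchronySpace_iff [Nontrivial E] (hr : Equivalence r) :
    (∀ f : (Fin m → E) → E, ∀ x ∈ synchronySpace r E, networkMap σ f x ∈ synchronySpace r E) ↔
      IsBalanced σ r :=
  ⟨isBalanced_of_forall_networkMap_mem hr, fun hσ f _ hx => hσ.networkMap_mem_synchronySpace f hx⟩

end

/-- For a homogeneous network with input maps `σ : Fin m → (V → V)` and an
equivalence relation `~` on `V`, the synchrony space `Syn(~, ℝ)` is robustly
invariant (i.e. preserved by the network map for every response function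
`f : (Fin m → ℝ) → ℝ`) if and only if `~` is balanced. -/
theorem robust_synchrony_iff_balanced {V : Type*} {m : ℕ}
    (σ : Fin m → V → V) (r : V → V → Prop) (hr : Equivalence r) :
    (∀ f : (Fin m → ℝ) → ℝ, ∀ x : V → ℝ, (∀ v w, r v w → x v = x w) →
        ∀ v w, r v w → networkMap σ f x v = networkMap σ f x w)
    ↔ (∀ (j : Fin m) (v w : V), r v w → r (σ j v) (σ j w)) :=
  forall_networkMap_mem_synchronySpace_iff (E := ℝ) hr
end

section
/- Let V₁, V₂ be types with input maps σ¹ : Fin m → (V₁ → V₁) and σ² : Fin m → (V₂ → V₂), and let φ : V₁ → V₂ be a graph fibration, i.e. φ ∘ σ¹ j = σ² j ∘ φ for every j : Fin m. Then for every type E, every response function f : (Fin m → E) → E, and every y : V₂ → E, the pullback conjugates the network maps: γ[σ¹,f] (y ∘ φ) = (γ[σ²,f] y) ∘ φ. Moreover, every x : V₁ → E in the range of the pullback φ* (i.e. x = y ∘ φ for some y) satisfies x v = x w whenever φ v = φ w. -/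
theorem networkMap_comp_of_semiconj {V₁ V₂ E : Type*} {m : ℕ} {σ1 : Fin m → V₁ → V₁}
    {σ2 : Fin m → V₂ → V₂} {φ : V₁ → V₂} (h : ∀ j, Function.Semiconj φ (σ1 j) (σ2 j))
    (f : (Fin m → E) → E) (y : V₂ → E) :
    networkMap σ1 f (y ∘ φ) = networkMap σ2 f y ∘ φ :=
  funext fun v => congrArg f (funext fun j => congrArg y (h j v))

/-- If `φ : V₁ → V₂` is a graph fibration between homogeneous networks
(`φ ∘ σ1 j = σ2 j ∘ φ` for all `j`), then for every state space `E`, every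
response function `f` and every state `y : V₂ → E`, the pullback `φ* y = y ∘ φ`
conjugates the network maps: `γ[σ1,f] (y ∘ φ) = (γ[σ2,f] y) ∘ φ`.  Moreover,
every state in the range of the pullback is synchronous on the fibres of `φ`. -/
theorem fibration_conjugates_dynamics {V₁ V₂ : Type*} {m : ℕ}
    (σ1 : Fin m → V₁ → V₁) (σ2 : Fin m → V₂ → V₂) (φ : V₁ → V₂)
    (hφ : ∀ j : Fin m, φ ∘ σ1 j = σ2 j ∘ φ) :
    (∀ (E : Type*) (f : (Fin m → E) → E) (y : V₂ → E),
        networkMap σ1 f (y ∘ φ) = (networkMap σ2 f y) ∘ φ) ∧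
    (∀ (E : Type*) (x : V₁ → E), (∃ y : V₂ → E, x = y ∘ φ) →
        ∀ v w : V₁, φ v = φ w → x v = x w) := by
  refine ⟨fun E f y => ?_, ?_⟩
  · exact networkMap_comp_of_semiconj (fun j => Function.semiconj_iff_comp_eq.mpr (hφ j)) f y
  · rintro E x ⟨y, rfl⟩ v w hvw
    exact congrArg y hvw
end

section
/- Let (V₁, A₁, s₁, t₁, κ₁) and (V₂, A₂, s₂, t₂, κ₂) be homogeneous network graphs of valency m with induced input maps σ¹ and σ², and let φV : V₁ → V₂ be a map of vertices. Then there exists a map of arrows φA : A₁ → A₂ preserving colour, source and target (κ₂ ∘ φA = κ₁, s₂ ∘ φA = φV ∘ s₁, t₂ ∘ φA = φV ∘ t₁) if and only if φV intertwines the input maps, i.e. φV ∘ σ¹ j = σ² j ∘ φV for every j : Fin m. Moreover, any such pair (φV, φA) automatically has the graph-fibration property: for every vertex v₁ : V₁ and every arrow a₂ : A₂ with t₂ a₂ = φV v₁, there is a unique arrow a₁ : A₁ with t₁ a₁ = v₁ and φA a₁ = a₂. -/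
/-!
Since every vertex receives exactly one arrow of each colour, an arrow is the same thing as a
pair (target, colour), and its source is read off through the input maps: `s a = σ (κ a) (t a)`.
A colour- and target-preserving arrow map must therefore send the arrow `(v, j)` to the arrow
`(φV v, j)`, and it preserves sources exactly when `φV (σ¹ j v) = σ² j (φV v)`. The lifting
property is the bijection between arrows and pairs (target, colour) read backwards.
-/

section

variable {V₁ A₁ V₂ A₂ : Type*} {m : ℕ} {s₁ t₁ : A₁ → V₁} {κ₁ : A₁ → Fin m}
  {s₂ t₂ : A₂ → V₂} {κ₂ : A₂ → Fin m} {σ1 : Fin m → V₁ → V₁} {σ2 : Fin m → V₂ → V₂}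
  {φV : V₁ → V₂} {φA : A₁ → A₂}

theorem intertwines_of_arrow_map (h₁ : ∀ v j, ∃ a, t₁ a = v ∧ κ₁ a = j)
    (hσ1 : ∀ a, s₁ a = σ1 (κ₁ a) (t₁ a)) (hσ2 : ∀ a, s₂ a = σ2 (κ₂ a) (t₂ a))
    (hκ : ∀ a, κ₂ (φA a) = κ₁ a) (hs : ∀ a, s₂ (φA a) = φV (s₁ a))
    (ht : ∀ a, t₂ (φA a) = φV (t₁ a)) (j : Fin m) :
    φV ∘ σ1 j = σ2 j ∘ φV := by
  funext v
  obtain ⟨a, rfl, rfl⟩ := h₁ v j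
  calc φV (σ1 (κ₁ a) (t₁ a)) = φV (s₁ a) := by rw [hσ1]
    _ = s₂ (φA a) := (hs a).symm
    _ = σ2 (κ₁ a) (φV (t₁ a)) := by rw [hσ2, hκ, ht]

theorem exists_arrow_map_of_intertwines (h₂ : ∀ v j, ∃ a, t₂ a = v ∧ κ₂ a = j)
    (hσ1 : ∀ a, s₁ a = σ1 (κ₁ a) (t₁ a)) (hσ2 : ∀ a, s₂ a = σ2 (κ₂ a) (t₂ a))
    (hφ : ∀ j, φV ∘ σ1 j = σ2 j ∘ φV) :
    ∃ φA : A₁ → A₂, κ₂ ∘ φA = κ₁ ∧ s₂ ∘ φA = φV ∘ s₁ ∧ t₂ ∘ φA = φV ∘ t₁ := by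
  choose φA hφt hφκ using fun a => h₂ (φV (t₁ a)) (κ₁ a)
  refine ⟨φA, funext hφκ, funext fun a => ?_, funext hφt⟩
  calc s₂ (φA a) = σ2 (κ₁ a) (φV (t₁ a)) := by rw [hσ2, hφt, hφκ]
    _ = φV (s₁ a) := by rw [hσ1]; exact (congrFun (hφ _) _).symm

theorem existsUnique_lift_of_arrow_map (h₁ : ∀ v j, ∃! a, t₁ a = v ∧ κ₁ a = j)
    (h₂ : ∀ a b, t₂ a = t₂ b → κ₂ a = κ₂ b → a = b)
    (hκ : ∀ a, κ₂ (φA a) = κ₁ a) (ht : ∀ a, t₂ (φA a) = φV (t₁ a))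
    (v₁ : V₁) (a₂ : A₂) (ha₂ : t₂ a₂ = φV v₁) :
    ∃! a₁ : A₁, t₁ a₁ = v₁ ∧ φA a₁ = a₂ := by
  obtain ⟨a₁, ⟨rfl, hκa₁⟩, huniq⟩ := h₁ v₁ (κ₂ a₂)
  refine ⟨a₁, ⟨rfl, h₂ _ _ (by rw [ht, ha₂]) (by rw [hκ, hκa₁])⟩, ?_⟩
  rintro b ⟨hb, rfl⟩
  exact huniq b ⟨hb, (hκ b).symm⟩

end

/-- For homogeneous network graphs `(V₁, A₁, s₁, t₁, κ₁)` and
`(V₂, A₂, s₂, t₂, κ₂)` of valency `m` (each vertex receives exactly one arrow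
of each colour) with induced input maps `σ1` and `σ2`, a vertex map
`φV : V₁ → V₂` extends to a colour/source/target preserving arrow map
`φA : A₁ → A₂` if and only if `φV` intertwines the input maps; moreover, any
such pair `(φV, φA)` automatically satisfies the graph-fibration lifting
property: arrows targeting `φV v₁` lift uniquely to arrows targeting `v₁`. -/
theorem graph_fibration_iff_intertwines {V₁ A₁ V₂ A₂ : Type*} {m : ℕ}
    (s₁ t₁ : A₁ → V₁) (κ₁ : A₁ → Fin m)
    (s₂ t₂ : A₂ → V₂) (κ₂ : A₂ → Fin m)
    (h₁ : ∀ (v : V₁) (j : Fin m), ∃! a : A₁, t₁ a = v ∧ κ₁ a = j)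
    (h₂ : ∀ (v : V₂) (j : Fin m), ∃! a : A₂, t₂ a = v ∧ κ₂ a = j)
    (σ1 : Fin m → V₁ → V₁) (σ2 : Fin m → V₂ → V₂)
    (hσ1 : ∀ (j : Fin m) (v : V₁) (a : A₁), t₁ a = v → κ₁ a = j → s₁ a = σ1 j v)
    (hσ2 : ∀ (j : Fin m) (v : V₂) (a : A₂), t₂ a = v → κ₂ a = j → s₂ a = σ2 j v)
    (φV : V₁ → V₂) :
    ((∃ φA : A₁ → A₂,
        κ₂ ∘ φA = κ₁ ∧ s₂ ∘ φA = φV ∘ s₁ ∧ t₂ ∘ φA = φV ∘ t₁) ↔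
      (∀ j : Fin m, φV ∘ σ1 j = σ2 j ∘ φV)) ∧
    (∀ φA : A₁ → A₂,
        κ₂ ∘ φA = κ₁ → s₂ ∘ φA = φV ∘ s₁ → t₂ ∘ φA = φV ∘ t₁ →
        ∀ (v₁ : V₁) (a₂ : A₂), t₂ a₂ = φV v₁ →
          ∃! a₁ : A₁, t₁ a₁ = v₁ ∧ φA a₁ = a₂) := by
  have hs₁ : ∀ a, s₁ a = σ1 (κ₁ a) (t₁ a) := fun a => hσ1 _ _ a rfl rfl
  have hs₂ : ∀ a, s₂ a = σ2 (κ₂ a) (t₂ a) := fun a => hσ2 _ _ a rfl rfl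
  have h₂_inj : ∀ a b, t₂ a = t₂ b → κ₂ a = κ₂ b → a = b := fun a b ht hκ =>
    (h₂ (t₂ a) (κ₂ a)).unique ⟨rfl, rfl⟩ ⟨ht.symm, hκ.symm⟩
  refine ⟨⟨?_, exists_arrow_map_of_intertwines (fun v j => (h₂ v j).exists) hs₁ hs₂⟩, ?_⟩
  · rintro ⟨φA, hκ, hs, ht⟩
    exact intertwines_of_arrow_map (fun v j => (h₁ v j).exists) hs₁ hs₂
      (congrFun hκ) (congrFun hs) (congrFun ht)
  · intro φA hκ _ ht
    exact existsUnique_lift_of_arrow_map h₁ h₂_inj (congrFun hκ) (congrFun ht)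
end

section
/- Let σ : Fin m → (V → V) be the input maps of a homogeneous network, Σ_N the submonoid of Function.End V generated by {σ j | j : Fin m}, and σ̃ j the input maps of the fundamental network. Then for every cell v : V, the evaluation map φ_v : ↥Σ_N → V, φ_v τ = τ v, is a graph fibration from the fundamental network to the original network: σ j (φ_v τ) = φ_v (σ̃ j τ) for all j : Fin m and τ ∈ Σ_N; consequently the pullback conjugates the dynamics: for every type E, every response function f : (Fin m → E) → E and every x : V → E, one has γ̃[f] (x ∘ φ_v) = (γ[σ,f] x) ∘ φ_v. -/
/-- The monoid `Σ_N` of the homogeneous network: the submonoid of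
`Function.End V` generated by the input maps. -/
def SigmaN {V : Type*} {m : ℕ} (σ : Fin m → V → V) : Submonoid (Function.End V) :=
  Submonoid.closure (Set.range fun j => (σ j : Function.End V))

/-- The generating input maps belong to `Σ_N`. -/
theorem sigma_mem_SigmaN {V : Type*} {m : ℕ} (σ : Fin m → V → V) (j : Fin m) :
    (σ j : Function.End V) ∈ SigmaN σ :=
  Submonoid.subset_closure ⟨j, rfl⟩

/-- The input maps of the fundamental network: left composition with the
generators. -/
def σtilde {V : Type*} {m : ℕ} (σ : Fin m → V → V) (j : Fin m)
    (τ : SigmaN σ) : SigmaN σ :=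
  ⟨(show Function.End V from σ j) * τ.1, mul_mem (sigma_mem_SigmaN σ j) τ.2⟩

/-- The fundamental network map with response function `f`. -/
def γtilde {V E : Type*} {m : ℕ} (σ : Fin m → V → V)
    (f : (Fin m → E) → E) (X : SigmaN σ → E) : SigmaN σ → E :=
  fun τ => f (fun j => X (σtilde σ j τ))

theorem networkMap_comp_of_fibration {W V E : Type*} {m : ℕ} {σ' : Fin m → W → W}
    {σ : Fin m → V → V} {φ : W → V} (hφ : ∀ j w, σ j (φ w) = φ (σ' j w))
    (f : (Fin m → E) → E) (x : V → E) :
    networkMap σ' f (x ∘ φ) = networkMap σ f x ∘ φ := by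
  funext w
  simp only [networkMap, Function.comp_apply, hφ]

theorem γtilde_eq_networkMap {V E : Type*} {m : ℕ} (σ : Fin m → V → V)
    (f : (Fin m → E) → E) : γtilde σ f = networkMap (σtilde σ) f :=
  rfl

theorem σtilde_apply {V : Type*} {m : ℕ} (σ : Fin m → V → V) (j : Fin m)
    (τ : SigmaN σ) (v : V) : (σtilde σ j τ).1 v = σ j (τ.1 v) :=
  rfl

/-- For every cell `v`, evaluation at `v` is a graph fibration from the
fundamental network to the original network, and the corresponding pullback
conjugates the dynamics of the two networks. -/
theorem fundamental_fibration {V : Type*} {m : ℕ} (σ : Fin m → V → V) (v : V) :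
    (∀ (j : Fin m) (τ : SigmaN σ), σ j (τ.1 v) = (σtilde σ j τ).1 v) ∧
    (∀ (E : Type*) (f : (Fin m → E) → E) (x : V → E),
        γtilde σ f (fun τ : SigmaN σ => x (τ.1 v))
          = fun τ : SigmaN σ => networkMap σ f x (τ.1 v)) := by
  have fibration : ∀ j τ, σ j (τ.1 v) = (σtilde σ j τ).1 v := fun j τ =>
    (σtilde_apply σ j τ v).symm
  refine ⟨fibration, fun E f x => ?_⟩
  rw [γtilde_eq_networkMap]
  exact networkMap_comp_of_fibration (φ := fun τ : SigmaN σ => τ.1 v) fibration f x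
end

section
/- Let σ : Fin m → (V → V) be the input maps of a homogeneous network and Σ_N the submonoid of Function.End V generated by {σ j | j : Fin m}. The left-regular representation Λ : ↥Σ_N →* Function.End ↥Σ_N, defined by Λ σ₀ τ = σ₀ * τ, is an injective monoid homomorphism, and its range equals the submonoid of Function.End ↥Σ_N generated by the input maps {σ̃ j | j : Fin m} of the fundamental network (where σ̃ j τ = σ j ∘ τ). In particular Σ_N is isomorphic as a monoid to the monoid Σ_{Ñ} generated by the input maps of the fundamental network, so the fundamental network of the fundamental network is isomorphic to the fundamental network itself. -/
theorem MonoidHom.leftInverse_apply_one {M : Type*} [Monoid M] (Λ : M →* Function.End M)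
    (hΛ : ∀ a b : M, Λ a b = a * b) : Function.LeftInverse (fun φ : Function.End M => φ 1) Λ :=
  fun a => (hΛ a 1).trans (mul_one a)

theorem MonoidHom.mrange_eq_closure_image_coe_preimage {M N : Type*} [Monoid M] [Monoid N]
    {s : Set M} (f : Submonoid.closure s →* N) :
    MonoidHom.mrange f = Submonoid.closure (f '' ((↑) ⁻¹' s)) := by
  rw [MonoidHom.mrange_eq_map, ← Submonoid.closure_closure_coe_preimage, MonoidHom.map_mclosure]

section LeftRegular

variable {V : Type*} {m : ℕ} (σ : Fin m → V → V) (Λ : SigmaN σ →* Function.End (SigmaN σ))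

theorem σtilde_eq_apply_sigma (hΛ : ∀ σ₀ τ : SigmaN σ, Λ σ₀ τ = σ₀ * τ) (j : Fin m) :
    (show Function.End (SigmaN σ) from σtilde σ j) = Λ ⟨σ j, sigma_mem_SigmaN σ j⟩ :=
  funext fun τ => (hΛ ⟨σ j, sigma_mem_SigmaN σ j⟩ τ).symm

theorem image_generators_eq_range_σtilde (hΛ : ∀ σ₀ τ : SigmaN σ, Λ σ₀ τ = σ₀ * τ) :
    Λ '' (((↑) : SigmaN σ → Function.End V) ⁻¹' Set.range fun j => (σ j : Function.End V)) =
      Set.range fun j : Fin m => (show Function.End (SigmaN σ) from σtilde σ j) := by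
  ext φ
  constructor
  · rintro ⟨⟨_, _⟩, ⟨j, rfl⟩, rfl⟩
    exact ⟨j, σtilde_eq_apply_sigma σ Λ hΛ j⟩
  · rintro ⟨j, rfl⟩
    exact ⟨_, ⟨j, rfl⟩, (σtilde_eq_apply_sigma σ Λ hΛ j).symm⟩

end LeftRegular

/-- The left-regular representation `Λ` of `Σ_N` on the cells of the
fundamental network (`Λ σ₀ τ = σ₀ * τ`) is an injective monoid homomorphism
whose range is the submonoid of `Function.End ↥Σ_N` generated by the input
maps `σ̃ j` of the fundamental network.  In particular `Σ_N` is isomorphic as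
a monoid to the monoid generated by the input maps of the fundamental network,
so the fundamental network of the fundamental network is isomorphic to the
fundamental network itself. -/
theorem fundamental_of_fundamental {V : Type*} {m : ℕ} (σ : Fin m → V → V)
    (Λ : SigmaN σ →* Function.End (SigmaN σ))
    (hΛ : ∀ (σ₀ τ : SigmaN σ), Λ σ₀ τ = σ₀ * τ) :
    Function.Injective Λ ∧
    MonoidHom.mrange Λ =
      Submonoid.closure
        (Set.range fun j : Fin m =>
          (show Function.End (SigmaN σ) from σtilde σ j)) ∧
    Nonempty
      (SigmaN σ ≃*
        Submonoid.closure
          (Set.range fun j : Fin m =>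
            (show Function.End (SigmaN σ) from σtilde σ j))) := by
  have hinv := MonoidHom.leftInverse_apply_one Λ hΛ
  have hrange : MonoidHom.mrange Λ =
      Submonoid.closure (Set.range fun j : Fin m =>
        (show Function.End (SigmaN σ) from σtilde σ j)) := by
    rw [← image_generators_eq_range_σtilde σ Λ hΛ]
    exact MonoidHom.mrange_eq_closure_image_coe_preimage Λ
  exact ⟨hinv.injective, hrange,
    ⟨(MulEquiv.ofLeftInverse' Λ hinv).trans (MulEquiv.submonoidCongr hrange)⟩⟩
end

section
/- Let σ : Fin m → (V → V) be the input maps of a homogeneous network and Σ_N the submonoid of Function.End V generated by {σ j | j : Fin m}. Let ≈ be an equivalence relation on ↥Σ_N that is balanced for the fundamental network, i.e. for every j : Fin m and all τ ρ ∈ Σ_N, τ ≈ ρ implies σ̃ j τ ≈ σ̃ j ρ. Let E be a type and let γ : (↥Σ_N → E) → (↥Σ_N → E) be any Σ_N-equivariant map, i.e. for every ρ ∈ Σ_N and every X : ↥Σ_N → E, γ (fun τ => X (τ * ρ)) = fun τ => (γ X) (τ * ρ). Then γ maps the synchrony space Syn_≈ = {X : ↥Σ_N → E | ∀ τ ρ,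 τ ≈ ρ → X τ = X ρ} into itself. -/
/-! Balancedness lets the relation be pushed along left multiplication by any word in the
generators, so `X (· * τ)` and `X (· * ρ)` agree whenever `τ ≈ ρ`. Equivariance turns these two
right translates into `γ X (· * τ)` and `γ X (· * ρ)`, and evaluating at `1` gives
`γ X τ = γ X ρ`. -/

theorem Submonoid.closure_rel_mul_left_of_forall_mem {M : Type*} [Monoid M] {s : Set M}
    (r : Submonoid.closure s → Submonoid.closure s → Prop)
    (hs : ∀ x (hx : x ∈ s) (τ ρ : Submonoid.closure s),
      r τ ρ → r (⟨x, Submonoid.subset_closure hx⟩ * τ) (⟨x, Submonoid.subset_closure hx⟩ * ρ))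
    (w τ ρ : Submonoid.closure s) (h : r τ ρ) : r (w * τ) (w * ρ) := by
  obtain ⟨w, hw⟩ := w
  induction hw using Submonoid.closure_induction generalizing τ ρ with
  | mem x hx => exact hs x hx τ ρ h
  | one => exact (one_mul τ).symm ▸ (one_mul ρ).symm ▸ h
  | mul x y hx hy ihx ihy =>
    have hxy := ihx _ _ (ihy τ ρ h)
    simp only [← mul_assoc] at hxy
    exact hxy

theorem apply_eq_of_rel_of_mul_left {M E : Type*} [Monoid M] (r : M → M → Prop)
    (hr : ∀ w τ ρ, r τ ρ → r (w * τ) (w * ρ))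
    (γ : (M → E) → (M → E))
    (hγ : ∀ (ρ : M) (X : M → E), γ (fun τ => X (τ * ρ)) = fun τ => γ X (τ * ρ))
    (X : M → E) (hX : ∀ τ ρ, r τ ρ → X τ = X ρ) {τ ρ : M} (h : r τ ρ) :
    γ X τ = γ X ρ := by
  have htranslate : (fun w => X (w * τ)) = fun w => X (w * ρ) :=
    funext fun w => hX _ _ (hr w τ ρ h)
  calc γ X τ = γ (fun w => X (w * τ)) 1 := by simp only [hγ, one_mul]
    _ = γ (fun w => X (w * ρ)) 1 := by rw [htranslate]
    _ = γ X ρ := by simp only [hγ, one_mul]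

theorem equivariant_preserves_balanced_synchrony_general {V E : Type*} {m : ℕ}
    (σ : Fin m → V → V)
    (r : SigmaN σ → SigmaN σ → Prop)
    (hbal : ∀ (j : Fin m) (τ ρ : SigmaN σ), r τ ρ → r (σtilde σ j τ) (σtilde σ j ρ))
    (γ : (SigmaN σ → E) → (SigmaN σ → E))
    (heq : ∀ (ρ : SigmaN σ) (X : SigmaN σ → E),
        γ (fun τ => X (τ * ρ)) = fun τ => γ X (τ * ρ)) :
    ∀ X : SigmaN σ → E, (∀ τ ρ : SigmaN σ, r τ ρ → X τ = X ρ) →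
      ∀ τ ρ : SigmaN σ, r τ ρ → γ X τ = γ X ρ := by
  have hmul : ∀ w τ ρ : SigmaN σ, r τ ρ → r (w * τ) (w * ρ) :=
    Submonoid.closure_rel_mul_left_of_forall_mem r <| by
      rintro _ ⟨j, rfl⟩
      exact hbal j
  intro X hX τ ρ h
  exact apply_eq_of_rel_of_mul_left r hmul γ heq X hX h

/-- Every balanced equivalence relation on the cells of the fundamental
network gives a synchrony space that is invariant under *every*
`Σ_N`-equivariant map (not just fundamental network maps). -/
theorem equivariant_preserves_balanced_synchrony {V E : Type*} {m : ℕ}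
    (σ : Fin m → V → V)
    (r : SigmaN σ → SigmaN σ → Prop) (hr : Equivalence r)
    (hbal : ∀ (j : Fin m) (τ ρ : SigmaN σ), r τ ρ → r (σtilde σ j τ) (σtilde σ j ρ))
    (γ : (SigmaN σ → E) → (SigmaN σ → E))
    (heq : ∀ (ρ : SigmaN σ) (X : SigmaN σ → E),
        γ (fun τ => X (τ * ρ)) = fun τ => γ X (τ * ρ)) :
    ∀ X : SigmaN σ → E, (∀ τ ρ : SigmaN σ, r τ ρ → X τ = X ρ) →
      ∀ τ ρ : SigmaN σ, r τ ρ → γ X τ = γ X ρ :=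
  equivariant_preserves_balanced_synchrony_general σ r hbal γ heq
end

section
/- Let σ : Fin m → (V → V) be the input maps of a homogeneous network, v : V a cell, Σ_N the submonoid of Function.End V generated by {σ j | j : Fin m}, and let ~ be a balanced equivalence relation on V (∀ j v₁ v₂, v₁ ~ v₂ → σ j v₁ ~ σ j v₂). Let E be a type and let γ : (↥Σ_N → E) → (↥Σ_N → E) be any Σ_N-equivariant map, i.e. for every ρ ∈ Σ_N and every X : ↥Σ_N → E, γ (fun τ => X (τ * ρ)) = fun τ => (γ X) (τ * ρ). Then γ maps the synchrony space {X : ↥Σ_N → E | ∀ τ ρ : ↥Σ_N, (τ : V → V) v ~ (ρ : V → V) v → X τ = X ρ} into itself. (Thus every robust synchrony of the original network, pulled back to the fundamental lift along evaluation at v, is an invariant subspace for arbitrary Σ_N-equivariant dynamics.) -/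
def relPreservingSubmonoid {V : Type*} (r : V → V → Prop) : Submonoid (Function.End V) where
  carrier := {g | ∀ a b, r a b → r (g a) (g b)}
  one_mem' := fun _ _ h => h
  mul_mem' := fun hg hh a b h => hg _ _ (hh a b h)

theorem SigmaN_le_relPreservingSubmonoid {V : Type*} {m : ℕ} (σ : Fin m → V → V)
    {r : V → V → Prop} (hbal : ∀ (j : Fin m) (v₁ v₂ : V), r v₁ v₂ → r (σ j v₁) (σ j v₂)) :
    SigmaN σ ≤ relPreservingSubmonoid r :=
  Submonoid.closure_le.mpr <| Set.range_subset_iff.mpr hbal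

theorem apply_eq_of_rightTranslates_eq {M E : Type*} [Monoid M] {γ : (M → E) → (M → E)}
    (heq : ∀ (ρ : M) (X : M → E), γ (fun τ => X (τ * ρ)) = fun τ => γ X (τ * ρ))
    {X : M → E} {τ ρ : M} (h : (fun s => X (s * τ)) = fun s => X (s * ρ)) :
    γ X τ = γ X ρ :=
  calc γ X τ = γ X (1 * τ) := by rw [one_mul]
    _ = γ (fun s => X (s * τ)) 1 := (congrFun (heq τ X) 1).symm
    _ = γ (fun s => X (s * ρ)) 1 := by rw [h]
    _ = γ X (1 * ρ) := congrFun (heq ρ X) 1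
    _ = γ X ρ := by rw [one_mul]

theorem equivariant_preserves_pulled_back_synchrony_general {V E : Type*} {m : ℕ}
    (σ : Fin m → V → V) (v : V)
    (r : V → V → Prop)
    (hbal : ∀ (j : Fin m) (v₁ v₂ : V), r v₁ v₂ → r (σ j v₁) (σ j v₂))
    (γ : (SigmaN σ → E) → (SigmaN σ → E))
    (heq : ∀ (ρ : SigmaN σ) (X : SigmaN σ → E),
        γ (fun τ => X (τ * ρ)) = fun τ => γ X (τ * ρ)) :
    ∀ X ∈ {X : SigmaN σ → E | ∀ τ ρ : SigmaN σ, r (τ.1 v) (ρ.1 v) → X τ = X ρ},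
      γ X ∈ {X : SigmaN σ → E | ∀ τ ρ : SigmaN σ, r (τ.1 v) (ρ.1 v) → X τ = X ρ} := by
  intro X hX τ ρ hτρ
  apply apply_eq_of_rightTranslates_eq heq
  funext s
  exact hX (s * τ) (s * ρ) (SigmaN_le_relPreservingSubmonoid σ hbal s.2 _ _ hτρ)

/-- Every robust synchrony of the original network (a balanced equivalence
relation `~` on `V`), pulled back to the fundamental lift along evaluation at
a cell `v`, is an invariant subspace for every `Σ_N`-equivariant map. -/
theorem equivariant_preserves_pulled_back_synchrony {V E : Type*} {m : ℕ}
    (σ : Fin m → V → V) (v : V)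
    (r : V → V → Prop) (hr : Equivalence r)
    (hbal : ∀ (j : Fin m) (v₁ v₂ : V), r v₁ v₂ → r (σ j v₁) (σ j v₂))
    (γ : (SigmaN σ → E) → (SigmaN σ → E))
    (heq : ∀ (ρ : SigmaN σ) (X : SigmaN σ → E),
        γ (fun τ => X (τ * ρ)) = fun τ => γ X (τ * ρ)) :
    ∀ X ∈ {X : SigmaN σ → E | ∀ τ ρ : SigmaN σ, r (τ.1 v) (ρ.1 v) → X τ = X ρ},
      γ X ∈ {X : SigmaN σ → E | ∀ τ ρ : SigmaN σ, r (τ.1 v) (ρ.1 v) → X τ = X ρ} :=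
  equivariant_preserves_pulled_back_synchrony_general σ v r hbal γ heq
end

section
/- Let σ : Fin m → (V → V) be the input maps of a homogeneous network, S ⊆ V a set with decidable membership, and φS : V → V an interior symmetry of S (φS v = v for v ∉ S, φS v ∈ S for v ∈ S, and φS (σ j v) = σ j (φS v) for all v ∈ S and j). Define Φ : V ⊕ ↥S → V ⊕ ↥S by Φ (Sum.inl v) = Sum.inl v and Φ (Sum.inr ⟨s, hs⟩) = Sum.inr ⟨φS s, _⟩ (using φS s ∈ S). Then Φ is a self-fibration of the connected sum network: Φ (σ⊔ j x) = σ⊔ j (Φ x) for all j : Fin m and x : V ⊕ ↥S. -/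
/-!
On the copy of `S`, an input map of the connected sum is `σ j` followed by the map `V → V ⊕ S`
that sends a cell into the copy of `S` whenever possible. An interior symmetry fixes the cells
outside `S` and preserves `S`, so `Φ` intertwines that map with `φS`; the equivariance of `φS`
on `S` then carries `Φ` through the input maps.
-/

/-- The input maps of the connected sum network `N ⊔_{∂S} N^S`, with cell set
`V ⊕ ↥S`. -/
def sigmaSum {V : Type*} {m : ℕ} (σ : Fin m → V → V) (S : Set V)
    [DecidablePred (· ∈ S)] (j : Fin m) : V ⊕ S → V ⊕ S
  | Sum.inl v => Sum.inl (σ j v)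
  | Sum.inr s =>
      if h : σ j s.1 ∈ S then Sum.inr ⟨σ j s.1, h⟩ else Sum.inl (σ j s.1)

def toSumOfMem {V : Type*} (S : Set V) [DecidablePred (· ∈ S)] (w : V) : V ⊕ S :=
  if h : w ∈ S then Sum.inr ⟨w, h⟩ else Sum.inl w

theorem sigmaSum_inr {V : Type*} {m : ℕ} (σ : Fin m → V → V) (S : Set V)
    [DecidablePred (· ∈ S)] (j : Fin m) (s : S) :
    sigmaSum σ S j (Sum.inr s) = toSumOfMem S (σ j s) :=
  rfl

theorem map_toSumOfMem {V : Type*} (S : Set V) [DecidablePred (· ∈ S)] (φS : V → V)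
    (h1 : ∀ v ∉ S, φS v = v) (h2 : ∀ v ∈ S, φS v ∈ S) (Φ : V ⊕ S → V ⊕ S)
    (hΦl : ∀ v : V, Φ (Sum.inl v) = Sum.inl v)
    (hΦr : ∀ s : S, Φ (Sum.inr s) = Sum.inr ⟨φS s.1, h2 s.1 s.2⟩) (w : V) :
    Φ (toSumOfMem S w) = toSumOfMem S (φS w) := by
  by_cases hw : w ∈ S
  · simp only [toSumOfMem, dif_pos hw, dif_pos (h2 w hw), hΦr]
  · simp only [toSumOfMem, dif_neg hw, h1 w hw, hΦl]

/-- An interior symmetry of `S` induces a self-fibration `Φ` of the connected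
sum network: `Φ` commutes with all input maps of the connected sum. -/
theorem interior_symmetry_self_fibration {V : Type*} {m : ℕ}
    (σ : Fin m → V → V) (S : Set V) [DecidablePred (· ∈ S)]
    (φS : V → V)
    (h1 : ∀ v ∉ S, φS v = v)
    (h2 : ∀ v ∈ S, φS v ∈ S)
    (h3 : ∀ v ∈ S, ∀ j : Fin m, φS (σ j v) = σ j (φS v))
    (Φ : V ⊕ S → V ⊕ S)
    (hΦl : ∀ v : V, Φ (Sum.inl v) = Sum.inl v)
    (hΦr : ∀ s : S, Φ (Sum.inr s) = Sum.inr ⟨φS s.1, h2 s.1 s.2⟩) :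
    ∀ (j : Fin m) (x : V ⊕ S), Φ (sigmaSum σ S j x) = sigmaSum σ S j (Φ x) := by
  intro j x
  cases x with
  | inl v => rw [hΦl]; exact hΦl (σ j v)
  | inr s =>
    rw [hΦr, sigmaSum_inr, sigmaSum_inr, map_toSumOfMem S φS h1 h2 Φ hΦl hΦr, h3 s s.2 j]
end

section
/- Let V be a type, S ⊆ V a set, and φS : V → V a map with φS v ∈ S for every v ∈ S. On the connected-sum cell set V ⊕ ↥S, let K : V ⊕ ↥S → V ⊕ ↥S be the map K (Sum.inl v) = Sum.inl v, K (Sum.inr s) = Sum.inl s, and let Φ : V ⊕ ↥S → V ⊕ ↥S be Φ (Sum.inl v) = Sum.inl v, Φ (Sum.inr ⟨s, hs⟩) = Sum.inr ⟨φS s, _⟩. Then for every type E, the image under precomposition with Sum.inl of the intersection of fixed-point sets {X : (V ⊕ ↥S) → E | X ∘ K = X} ∩ {X | X ∘ Φ = X} equals the set {x : V → E | ∀ v ∈ S, x v = x (φS v)}. -/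
/-!
A state fixed by the fold `K` is determined by its restriction `x` to `V`: its value at the
copy `Sum.inr s` must be `x s`. For such a state, being fixed by `Φ` says exactly that
`x s = x (φS s)` for `s ∈ S`, so restricting to `V` identifies the common fixed points with
the synchrony space.
-/

open Function

namespace Sum

variable {α β γ : Type*}

theorem comp_eq_self_iff_of_apply_inl {F : α ⊕ β → α ⊕ β} (hF : ∀ a, F (inl a) = inl a)
    (X : α ⊕ β → γ) : X ∘ F = X ↔ ∀ b, X (F (inr b)) = X (inr b) := by
  refine ⟨fun h b => congrFun h (inr b), fun h => funext ?_⟩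
  rintro (a | b)
  · simp only [comp_apply, hF]
  · exact h b

end Sum

section ConnectedSum

variable {V E : Type*} {S : Set V}

def extendToConnectedSum (x : V → E) : V ⊕ S → E :=
  Sum.elim x fun s => x s

theorem comp_fold_eq_self_iff {K : V ⊕ S → V ⊕ S} (hK1 : ∀ v, K (Sum.inl v) = Sum.inl v)
    (hK2 : ∀ s : S, K (Sum.inr s) = Sum.inl s.1) (X : V ⊕ S → E) :
    X ∘ K = X ↔ X = extendToConnectedSum (X ∘ Sum.inl) := by
  rw [Sum.comp_eq_self_iff_of_apply_inl hK1]
  constructor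
  · intro h
    ext (v | s)
    · rfl
    · rw [← h, hK2]
      rfl
  · intro h s
    rw [hK2, h]
    rfl

theorem extendToConnectedSum_comp_eq_self_iff {φS : V → V} (h2 : ∀ v ∈ S, φS v ∈ S)
    {Φ : V ⊕ S → V ⊕ S} (hΦ1 : ∀ v, Φ (Sum.inl v) = Sum.inl v)
    (hΦ2 : ∀ s : S, Φ (Sum.inr s) = Sum.inr ⟨φS s.1, h2 s.1 s.2⟩) (x : V → E) :
    extendToConnectedSum x ∘ Φ = extendToConnectedSum x ↔ ∀ v ∈ S, x v = x (φS v) := by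
  rw [Sum.comp_eq_self_iff_of_apply_inl hΦ1]
  simp only [hΦ2, extendToConnectedSum, Sum.elim_inr, Subtype.forall]
  exact forall₂_congr fun _ _ => eq_comm

end ConnectedSum

/-- The intersection of the fixed-point sets of the pullbacks of the fold map
`K` and of the interior symmetry `Φ` on the connected sum, restricted to the
original network via `Sum.inl`, is exactly the interior-symmetry synchrony
space `{x | ∀ v ∈ S, x v = x (φS v)}`. -/
theorem fixed_points_give_interior_synchrony {V E : Type*}
    (S : Set V) (φS : V → V) (h2 : ∀ v ∈ S, φS v ∈ S)
    (K : V ⊕ S → V ⊕ S)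
    (hK1 : ∀ v : V, K (Sum.inl v) = Sum.inl v)
    (hK2 : ∀ s : S, K (Sum.inr s) = Sum.inl s.1)
    (Φ : V ⊕ S → V ⊕ S)
    (hΦ1 : ∀ v : V, Φ (Sum.inl v) = Sum.inl v)
    (hΦ2 : ∀ s : S, Φ (Sum.inr s) = Sum.inr ⟨φS s.1, h2 s.1 s.2⟩) :
    (fun X : (V ⊕ S) → E => X ∘ Sum.inl) ''
        ({X : (V ⊕ S) → E | X ∘ K = X} ∩ {X : (V ⊕ S) → E | X ∘ Φ = X})
      = {x : V → E | ∀ v ∈ S, x v = x (φS v)} := by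
  ext x
  constructor
  · rintro ⟨X, ⟨hXK, hXΦ⟩, rfl⟩
    have hX : X = extendToConnectedSum (X ∘ Sum.inl) := (comp_fold_eq_self_iff hK1 hK2 X).mp hXK
    rw [Set.mem_ofPred_eq, hX] at hXΦ
    exact (extendToConnectedSum_comp_eq_self_iff h2 hΦ1 hΦ2 _).mp hXΦ
  · intro hx
    refine ⟨extendToConnectedSum x, ⟨?_, ?_⟩, rfl⟩
    · exact (comp_fold_eq_self_iff hK1 hK2 _).mpr rfl
    · exact (extendToConnectedSum_comp_eq_self_iff h2 hΦ1 hΦ2 x).mpr hx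
end

section
/- Let (C, V, E, m, σ) define a nonhomogeneous network structure with closed family Σ, and fix a colour c : C. For each colour d, let ≈_d be an equivalence relation on {g // g ∈ Σ c d} that is balanced for the extended family of fundamental input maps: whenever g ≈_d g', then for every colour e and every k ∈ Σ d e, (k ∘ g) ≈_e (k ∘ g'). Let (γ^b)_{b : C} be a family of maps γ^b : ((d : C) → {g // g ∈ Σ b d} → E d) → ((d : C) → {g // g ∈ Σ b d} → E d) that is Σ-equivariant: for all colours b b' : C and every h ∈ Σ b b', φ_h* ∘ γ^{b'} = γ^b ∘ φ_h*, where (φ_h* X) d g = X d ⟨g ∘ h, _⟩. Then γ^c maps the synchrony space {X : (d : C) → {g // g ∈ Σ c d} → E d | ∀ d, ∀ g g', g ≈_d g' → X d g = X d g'} into itself. -/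
/-- The network map of a nonhomogeneous network with cells `V c` of colour
`c`, state spaces `E c`, arities `m`, input maps `σ` and response functions
`f`. -/
def nhNetworkMap {C : Type*} {V E : C → Type*} {m : C → C → ℕ}
    (σ : ∀ d c : C, Fin (m d c) → (V c → V d))
    (f : ∀ c : C, ((d : C) → Fin (m d c) → E d) → E c)
    (x : (c : C) → V c → E c) : (c : C) → V c → E c :=
  fun c v => f c (fun d j => x d (σ d c j v))

/-- A closed family for a nonhomogeneous network: sets `Sig c d` of maps
`V c → V d` containing the identities and the input maps and closed under
composition.  This is the semigroupoid `Σ_N`. -/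
structure ClosedFamily {C : Type*} (V : C → Type*) {m : C → C → ℕ}
    (σ : ∀ d c : C, Fin (m d c) → (V c → V d)) where
  Sig : ∀ c d : C, Set (V c → V d)
  id_mem : ∀ c : C, id ∈ Sig c c
  sigma_mem : ∀ (d c : C) (j : Fin (m d c)), σ d c j ∈ Sig c d
  comp_mem : ∀ (c d e : C), ∀ g ∈ Sig c d, ∀ h ∈ Sig d e, h ∘ g ∈ Sig c e

/-- The `c`-th fundamental network map of a nonhomogeneous network: its cells
of colour `d` are the elements of `Σ c d`, and its input maps are given by
left composition with the original input maps. -/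
def nhFundMap {C : Type*} {V E : C → Type*} {m : C → C → ℕ}
    {σ : ∀ d c : C, Fin (m d c) → (V c → V d)}
    (Sg : ClosedFamily V σ)
    (f : ∀ c : C, ((d : C) → Fin (m d c) → E d) → E c) (c : C)
    (X : (d : C) → {g : V c → V d // g ∈ Sg.Sig c d} → E d) :
    (d : C) → {g : V c → V d // g ∈ Sg.Sig c d} → E d :=
  fun d g =>
    f d (fun e j =>
      X e ⟨σ e d j ∘ g.1, Sg.comp_mem c d e g.1 g.2 (σ e d j) (Sg.sigma_mem e d j)⟩)

/-! The map `γ b` at a cell `g ∈ Σ b d` is, by equivariance along `g`, the map `γ d` evaluated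
at the identity cell on the pullback of the state along `g`. For a synchronous state and balanced
`r`, related cells `g`, `g'` have equal pullbacks, so `γ b` takes equal values on them. -/

namespace ClosedFamily

variable {C : Type*} {V E : C → Type*} {m : C → C → ℕ} {σ : ∀ d c : C, Fin (m d c) → (V c → V d)}
  (Sg : ClosedFamily V σ)

def pullback {b b' : C} (h : V b → V b') (hh : h ∈ Sg.Sig b b')
    (X : (d : C) → {g : V b → V d // g ∈ Sg.Sig b d} → E d) :
    (d : C) → {g : V b' → V d // g ∈ Sg.Sig b' d} → E d :=
  fun d g => X d ⟨g.1 ∘ h, Sg.comp_mem b b' d h hh g.1 g.2⟩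

def IsEquivariant
    (γ : ∀ b : C, ((d : C) → {g : V b → V d // g ∈ Sg.Sig b d} → E d) →
      ((d : C) → {g : V b → V d // g ∈ Sg.Sig b d} → E d)) : Prop :=
  ∀ (b b' : C) (h : V b → V b') (hh : h ∈ Sg.Sig b b')
    (X : (d : C) → {g : V b → V d // g ∈ Sg.Sig b d} → E d),
    γ b' (Sg.pullback h hh X) = Sg.pullback h hh (γ b X)

variable {c : C}

def IsBalanced (r : ∀ d : C, {g : V c → V d // g ∈ Sg.Sig c d} →
    {g : V c → V d // g ∈ Sg.Sig c d} → Prop) : Prop :=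
  ∀ (d : C) (g g' : {g : V c → V d // g ∈ Sg.Sig c d}), r d g g' →
    ∀ (e : C) (k : V d → V e) (hk : k ∈ Sg.Sig d e),
      r e ⟨k ∘ g.1, Sg.comp_mem c d e g.1 g.2 k hk⟩ ⟨k ∘ g'.1, Sg.comp_mem c d e g'.1 g'.2 k hk⟩

def synchrony (r : ∀ d : C, {g : V c → V d // g ∈ Sg.Sig c d} →
    {g : V c → V d // g ∈ Sg.Sig c d} → Prop) :
    Set ((d : C) → {g : V c → V d // g ∈ Sg.Sig c d} → E d) :=
  {X | ∀ (d : C) (g g' : {g : V c → V d // g ∈ Sg.Sig c d}), r d g g' → X d g = X d g'}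

variable {Sg}

theorem IsEquivariant.apply_eq_apply_pullback_id
    {γ : ∀ b : C, ((d : C) → {g : V b → V d // g ∈ Sg.Sig b d} → E d) →
      ((d : C) → {g : V b → V d // g ∈ Sg.Sig b d} → E d)}
    (hγ : Sg.IsEquivariant γ) {b : C} (X : (d : C) → {g : V b → V d // g ∈ Sg.Sig b d} → E d)
    (d : C) (g : {g : V b → V d // g ∈ Sg.Sig b d}) :
    γ b X d g = γ d (Sg.pullback g.1 g.2 X) d ⟨id, Sg.id_mem d⟩ :=
  (congrFun (congrFun (hγ b d g.1 g.2 X) d) ⟨id, Sg.id_mem d⟩).symm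

theorem IsBalanced.pullback_eq_of_mem_synchrony
    {r : ∀ d : C, {g : V c → V d // g ∈ Sg.Sig c d} → {g : V c → V d // g ∈ Sg.Sig c d} → Prop}
    (hr : Sg.IsBalanced r) {X : (d : C) → {g : V c → V d // g ∈ Sg.Sig c d} → E d}
    (hX : X ∈ Sg.synchrony r) {d : C} {g g' : {g : V c → V d // g ∈ Sg.Sig c d}}
    (hgg : r d g g') :
    Sg.pullback g.1 g.2 X = Sg.pullback g'.1 g'.2 X :=
  funext₂ fun e k => hX e _ _ (hr d g g' hgg e k.1 k.2)

theorem IsEquivariant.mapsTo_synchrony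
    {γ : ∀ b : C, ((d : C) → {g : V b → V d // g ∈ Sg.Sig b d} → E d) →
      ((d : C) → {g : V b → V d // g ∈ Sg.Sig b d} → E d)}
    (hγ : Sg.IsEquivariant γ)
    {r : ∀ d : C, {g : V c → V d // g ∈ Sg.Sig c d} → {g : V c → V d // g ∈ Sg.Sig c d} → Prop}
    (hr : Sg.IsBalanced r) :
    Set.MapsTo (γ c) (Sg.synchrony r) (Sg.synchrony r) := by
  intro X hX d g g' hgg
  rw [hγ.apply_eq_apply_pullback_id X d g, hγ.apply_eq_apply_pullback_id X d g',
    hr.pullback_eq_of_mem_synchrony hX hgg]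

end ClosedFamily

theorem nh_equivariant_preserves_synchrony_general {C : Type*} {V E : C → Type*}
    {m : C → C → ℕ}
    (σ : ∀ d c : C, Fin (m d c) → (V c → V d))
    (Sg : ClosedFamily V σ)
    (c : C)
    (r : ∀ d : C, {g : V c → V d // g ∈ Sg.Sig c d} →
      {g : V c → V d // g ∈ Sg.Sig c d} → Prop)
    (hbal : ∀ (d : C) (g g' : {g : V c → V d // g ∈ Sg.Sig c d}), r d g g' →
      ∀ (e : C) (k : V d → V e) (hk : k ∈ Sg.Sig d e),
        r e ⟨k ∘ g.1, Sg.comp_mem c d e g.1 g.2 k hk⟩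
            ⟨k ∘ g'.1, Sg.comp_mem c d e g'.1 g'.2 k hk⟩)
    (γfam : ∀ b : C,
      ((d : C) → {g : V b → V d // g ∈ Sg.Sig b d} → E d) →
      ((d : C) → {g : V b → V d // g ∈ Sg.Sig b d} → E d))
    (heq : ∀ (b b' : C) (h : V b → V b') (hh : h ∈ Sg.Sig b b')
        (X : (d : C) → {g : V b → V d // g ∈ Sg.Sig b d} → E d),
        γfam b' (fun d g => X d ⟨g.1 ∘ h, Sg.comp_mem b b' d h hh g.1 g.2⟩)
          = fun d g =>
              γfam b X d ⟨g.1 ∘ h, Sg.comp_mem b b' d h hh g.1 g.2⟩) :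
    ∀ X : (d : C) → {g : V c → V d // g ∈ Sg.Sig c d} → E d,
      (∀ (d : C) (g g' : {g : V c → V d // g ∈ Sg.Sig c d}),
          r d g g' → X d g = X d g') →
      ∀ (d : C) (g g' : {g : V c → V d // g ∈ Sg.Sig c d}),
        r d g g' → γfam c X d g = γfam c X d g' :=
  ClosedFamily.IsEquivariant.mapsTo_synchrony (Sg := Sg) heq hbal

/-- Synchrony from hidden semigroupoid symmetry for nonhomogeneous networks:
if the equivalence relations `r d` on the cells of the `c`-th fundamental
network are balanced for the extended family of fundamental input maps, then
every `Σ`-equivariant family of maps `γfam` preserves the corresponding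
synchrony space. -/
theorem nh_equivariant_preserves_synchrony {C : Type*} {V E : C → Type*}
    {m : C → C → ℕ}
    (σ : ∀ d c : C, Fin (m d c) → (V c → V d))
    (Sg : ClosedFamily V σ)
    (c : C)
    (r : ∀ d : C, {g : V c → V d // g ∈ Sg.Sig c d} →
      {g : V c → V d // g ∈ Sg.Sig c d} → Prop)
    (hr : ∀ d : C, Equivalence (r d))
    (hbal : ∀ (d : C) (g g' : {g : V c → V d // g ∈ Sg.Sig c d}), r d g g' →
      ∀ (e : C) (k : V d → V e) (hk : k ∈ Sg.Sig d e),
        r e ⟨k ∘ g.1, Sg.comp_mem c d e g.1 g.2 k hk⟩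
            ⟨k ∘ g'.1, Sg.comp_mem c d e g'.1 g'.2 k hk⟩)
    (γfam : ∀ b : C,
      ((d : C) → {g : V b → V d // g ∈ Sg.Sig b d} → E d) →
      ((d : C) → {g : V b → V d // g ∈ Sg.Sig b d} → E d))
    (heq : ∀ (b b' : C) (h : V b → V b') (hh : h ∈ Sg.Sig b b')
        (X : (d : C) → {g : V b → V d // g ∈ Sg.Sig b d} → E d),
        γfam b' (fun d g => X d ⟨g.1 ∘ h, Sg.comp_mem b b' d h hh g.1 g.2⟩)
          = fun d g =>
              γfam b X d ⟨g.1 ∘ h, Sg.comp_mem b b' d h hh g.1 g.2⟩) :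
    ∀ X : (d : C) → {g : V c → V d // g ∈ Sg.Sig c d} → E d,
      (∀ (d : C) (g g' : {g : V c → V d // g ∈ Sg.Sig c d}),
          r d g g' → X d g = X d g') →
      ∀ (d : C) (g g' : {g : V c → V d // g ∈ Sg.Sig c d}),
        r d g g' → γfam c X d g = γfam c X d g' :=
  nh_equivariant_preserves_synchrony_general σ Sg c r hbal γfam heq
end

section
/- Let V be a type, σ : Fin m → (V → V) input maps of a homogeneous network, and ~ a balanced equivalence relation on V (for every j : Fin m and all v w, v ~ w implies σ j v ~ σ j w). Then for every type E and every response function f : (Fin m → E) → E, the network map γ[σ,f] preserves the synchrony space Syn(~, E): if x : V → E satisfies x v = x w for all v ~ w, then γ[σ,f] x v = γ[σ,f] x w for all v ~ w. Thus Syn(~, E) is a robust synchrony space: it is invariant under the network dynamics for every choice of state space and response function. -/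
theorem networkMap_eq_of_forall_input_eq {V E : Type*} {m : ℕ} (σ : Fin m → V → V)
    (f : (Fin m → E) → E) (x : V → E) {v w : V} (h : ∀ j, x (σ j v) = x (σ j w)) :
    networkMap σ f x v = networkMap σ f x w :=
  congrArg f (funext h)

theorem balanced_gives_robust_synchrony_general {V : Type*} {m : ℕ}
    (σ : Fin m → V → V) (r : V → V → Prop)
    (hbal : ∀ (j : Fin m) (v w : V), r v w → r (σ j v) (σ j w)) :
    ∀ (E : Type*) (f : (Fin m → E) → E) (x : V → E),
      (∀ v w : V, r v w → x v = x w) →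
      ∀ v w : V, r v w → networkMap σ f x v = networkMap σ f x w :=
  fun _ f x hx v w hvw =>
    networkMap_eq_of_forall_input_eq σ f x fun j => hx _ _ (hbal j v w hvw)

/-- A balanced equivalence relation on the cells of a homogeneous network
yields a robust synchrony space: for every state space `E` and every response
function `f`, the network map preserves `Syn(~, E)`. -/
theorem balanced_gives_robust_synchrony {V : Type*} {m : ℕ}
    (σ : Fin m → V → V) (r : V → V → Prop) (hr : Equivalence r)
    (hbal : ∀ (j : Fin m) (v w : V), r v w → r (σ j v) (σ j w)) :
    ∀ (E : Type*) (f : (Fin m → E) → E) (x : V → E),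
      (∀ v w : V, r v w → x v = x w) →
      ∀ v w : V, r v w → networkMap σ f x v = networkMap σ f x w :=
  balanced_gives_robust_synchrony_general σ r hbal
end
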